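/- arXiv:1207.0164 — 4 statements merged into one kernel-verified Lean document; each statement's English description precedes it below -/
import Mathlib

section
/- Let P, Q ⊂ ℝ^n be rational polytopes such that P^∨ is a lattice polyhedron and P ⊕ Q is a free sum. Then Ehr_{P⊕Q}(t) = (1 − t)·Ehr_P(t)·Ehr_Q(t) in ℤ[[t]]; equivalently, for every integer k ≥ 0, L_{P⊕Q}(k) = Σ_{i=0}^{k} L_P(i)·L_Q(k−i) − Σ_{i=0}^{k−1} L_P(i)·L_Q(k−1−i). -/
open Set Pointwise
open scoped Classical

noncomputable section

namespace ArxivFreeSum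

/-- A point of `ℝ^m` is an integer lattice point iff all coordinates are integers. -/
def IsLat {m : ℕ} (x : Fin m → ℝ) : Prop := ∀ i, ∃ z : ℤ, x i = (z : ℝ)

/-- The set of integer lattice points of a set `S`. -/
def latt {m : ℕ} (S : Set (Fin m → ℝ)) : Set (Fin m → ℝ) := {x | x ∈ S ∧ IsLat x}

variable {n : ℕ}

/-- The affine embedding `α : ℝ^n → ℝ^{n+1}`, `a ↦ (a, 1)`. -/
def emb (a : Fin n → ℝ) : Fin (n + 1) → ℝ := Fin.snoc a 1

/-- The cone over `K`: all nonnegative multiples of `α(K)`. -/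
def cone (K : Set (Fin n → ℝ)) : Set (Fin (n + 1) → ℝ) :=
  {x | ∃ l : ℝ, ∃ a ∈ K, 0 ≤ l ∧ x = l • emb a}

/-- The last standard basis vector `e_{n+1}` of `ℝ^{n+1}`. -/
def eLast (n : ℕ) : Fin (n + 1) → ℝ := Pi.single (Fin.last n) 1

/-- The vertical projection `ε_J` onto the lower envelope of `cone J`. -/
def eps (J : Set (Fin n → ℝ)) (x : Fin (n + 1) → ℝ) : Fin (n + 1) → ℝ :=
  x - sSup {l : ℝ | x - l • eLast n ∈ cone J} • eLast n

/-- The lower envelope of `cone J`. -/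
def lenv (J : Set (Fin n → ℝ)) : Set (Fin (n + 1) → ℝ) := eps J '' cone J

/-- The lower lattice envelope of `cone J`. -/
def llenv (J : Set (Fin n → ℝ)) : Set (Fin (n + 1) → ℝ) := eps J '' latt (cone J)

/-- `J ⊕ K` is a free sum. -/
def IsFreeSum (J K : Set (Fin n → ℝ)) : Prop :=
  (0 : Fin n → ℝ) ∈ J ∧ (0 : Fin n → ℝ) ∈ K ∧
    ∀ m : Fin n → ℝ, m ∈ Submodule.span ℝ (J ∪ K) → IsLat m →
      ∃! q : (Fin n → ℝ) × (Fin n → ℝ),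
        (q.1 ∈ Submodule.span ℝ J ∧ IsLat q.1) ∧
        (q.2 ∈ Submodule.span ℝ K ∧ IsLat q.2) ∧ m = q.1 + q.2

/-- `N_{J,K}(m)`: the number of pairs of lattice points of `cone J` and `cone K` summing
to `m`. -/
def Npairs (J K : Set (Fin n → ℝ)) (m : Fin (n + 1) → ℤ) : ℕ :=
  Set.ncard {q : (Fin (n + 1) → ℝ) × (Fin (n + 1) → ℝ) |
    q.1 ∈ latt (cone J) ∧ q.2 ∈ latt (cone K) ∧ q.1 + q.2 = fun i => (m i : ℝ)}

/-- The coefficientwise form of the multivariate Braun equation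
`σ_{cone(J⊕K)} = (1 - z_{n+1}) σ_{cone J} σ_{cone K}`. -/
def BraunEq (J K : Set (Fin n → ℝ)) : Prop :=
  ∀ m : Fin (n + 1) → ℤ,
    (Npairs J K m : ℤ) - (Npairs J K (m - Pi.single (Fin.last n) 1) : ℤ) =
      if (fun i => (m i : ℝ)) ∈ cone (convexHull ℝ (J ∪ K)) then 1 else 0

/-- A rational polytope: convex hull of finitely many rational points. -/
def IsRatPolytope (P : Set (Fin n → ℝ)) : Prop :=
  ∃ V : Finset (Fin n → ℝ), (∀ v ∈ V, ∀ i, ∃ q : ℚ, v i = (q : ℝ)) ∧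
    P = convexHull ℝ (V : Set (Fin n → ℝ))

/-- A lattice polytope: convex hull of finitely many lattice points. -/
def IsLatPolytope (P : Set (Fin n → ℝ)) : Prop :=
  ∃ V : Finset (Fin n → ℝ), (∀ v ∈ V, IsLat v) ∧ P = convexHull ℝ (V : Set (Fin n → ℝ))

/-- The polar dual `P^∨ ⊆ (lin P)^*` of a polytope `P` containing the origin. -/
def dualSet (P : Set (Fin n → ℝ)) : Set (Module.Dual ℝ (Submodule.span ℝ P)) :=
  {φ | ∀ a : Submodule.span ℝ P, (a : Fin n → ℝ) ∈ P → φ a ≤ 1}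

/-- Membership in the dual integer lattice `(lin P)^*_ℤ`. -/
def IsDualLatticePt (P : Set (Fin n → ℝ)) (φ : Module.Dual ℝ (Submodule.span ℝ P)) : Prop :=
  ∀ a : Submodule.span ℝ P, IsLat (a : Fin n → ℝ) → ∃ z : ℤ, φ a = (z : ℝ)

/-- `P^∨` is a lattice polyhedron: every vertex (= extreme point) of `P^∨` lies in the
dual integer lattice. -/
def DualIsLatticePolyhedron (P : Set (Fin n → ℝ)) : Prop :=
  ∀ φ ∈ Set.extremePoints ℝ (dualSet P), IsDualLatticePt P φ

/-- `den(P^∨)`: the smallest positive integer `d` such that `d • P^∨` is a lattice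
polyhedron. -/
def dualDen (P : Set (Fin n → ℝ)) : ℕ :=
  sInf {d : ℕ | 0 < d ∧ ∀ φ ∈ Set.extremePoints ℝ (dualSet P), IsDualLatticePt P ((d : ℝ) • φ)}

/-- `L_P(k)`, with `L_P(0) = 1`. -/
def ehr (P : Set (Fin n → ℝ)) (k : ℕ) : ℕ :=
  if k = 0 then 1 else Set.ncard (latt ((k : ℝ) • P))

/-- The coefficientwise form of `Ehr_{P⊕Q}(t) = (1-t) Ehr_P(t) Ehr_Q(t)`. -/
def EhrEq (P Q : Set (Fin n → ℝ)) : Prop :=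
  ∀ k : ℕ,
    (ehr (convexHull ℝ (P ∪ Q)) k : ℤ) =
      (∑ i ∈ Finset.range (k + 1), (ehr P i : ℤ) * (ehr Q (k - i) : ℤ)) -
        ∑ i ∈ Finset.range k, (ehr P i : ℤ) * (ehr Q (k - 1 - i) : ℤ)

/-- `P` is reflexive: a lattice polytope containing the origin in its relative interior
whose polar dual is a lattice polytope. -/
def IsReflexive (P : Set (Fin n → ℝ)) : Prop :=
  IsLatPolytope P ∧ (0 : Fin n → ℝ) ∈ intrinsicInterior ℝ P ∧ DualIsLatticePolyhedron P

/-- `P` is Gorenstein of index `k`. -/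
def IsGorenstein (P : Set (Fin n → ℝ)) (k : ℕ) : Prop :=
  IsLatPolytope P ∧ 0 < k ∧
    ∃ m : Fin n → ℝ, IsLat m ∧ IsReflexive ((fun x => x - m) '' ((k : ℝ) • P))

/-- `p` is a rational point. -/
def IsRatPt (p : Fin n → ℝ) : Prop := ∀ i, ∃ q : ℚ, p i = (q : ℝ)

/-- Membership in the lattice `Λ^p` generated by `e_1, …, e_n` and `p`. -/
def InLambda (p x : Fin n → ℝ) : Prop :=
  ∃ (z : Fin n → ℤ) (c : ℤ), x = (fun i => (z i : ℝ)) + (c : ℝ) • p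

/-- `den(p)`: the lcm of the denominators of the coordinates of `p`, i.e. the least
positive integer `r` with `r • p` a lattice point. -/
def denPt (p : Fin n → ℝ) : ℕ := sInf {r : ℕ | 0 < r ∧ IsLat ((r : ℝ) • p)}

/-- The projection `ε^p_J` parallel to `α(p)` onto the `p`-lower envelope of `cone J`. -/
def epsP (p : Fin n → ℝ) (J : Set (Fin n → ℝ)) (x : Fin (n + 1) → ℝ) : Fin (n + 1) → ℝ :=
  x - sSup {l : ℝ | x - l • emb p ∈ cone J} • emb p

/-- The `p`-lower envelope of `cone J`. -/
def plenv (p : Fin n → ℝ) (J : Set (Fin n → ℝ)) : Set (Fin (n + 1) → ℝ) := epsP p J '' cone J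

/-- The `p`-lower lattice envelope of `cone J`. -/
def pllenv (p : Fin n → ℝ) (J : Set (Fin n → ℝ)) : Set (Fin (n + 1) → ℝ) :=
  epsP p J '' latt (cone J)

/-- `J ⊕ K` is an affine free sum with common (rational) point `p`. -/
def IsAffineFreeSum (J K : Set (Fin n → ℝ)) (p : Fin n → ℝ) : Prop :=
  IsRatPt p ∧ p ∈ J ∧ p ∈ K ∧
    ((affineSpan ℝ J : Set (Fin n → ℝ)) ∩ (affineSpan ℝ K : Set (Fin n → ℝ)) = {p}) ∧
    ∀ m : Fin n → ℝ, m ∈ Submodule.span ℝ ((fun x => x - p) '' (J ∪ K)) → InLambda p m →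
      ∃! q : (Fin n → ℝ) × (Fin n → ℝ),
        (q.1 ∈ Submodule.span ℝ ((fun x => x - p) '' J) ∧ InLambda p q.1) ∧
        (q.2 ∈ Submodule.span ℝ ((fun x => x - p) '' K) ∧ InLambda p q.2) ∧ m = q.1 + q.2

/-!
Since `P` and `Q` have rational vertices, `lin P ∩ lin Q` is a rational subspace; a nonzero
lattice point in it would have two decompositions, so the free-sum condition forces
`lin P ∩ lin Q = 0`. Hence every lattice point of `k (P ⊕ Q)` is uniquely `x + y` with
`x ∈ s P`, `y ∈ t Q`, `s + t = k`, and by the free-sum condition `x` and `y` are lattice points.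
Because `P^∨` is a lattice polyhedron, a lattice point `x ∈ s P` already lies in `⌊s⌋ P`: every
`φ ∈ P^∨` is dominated at `x` by a vertex of `P^∨`, whose value at `x` is an integer `≤ s`.
So the lattice points of `k (P ⊕ Q)` correspond to the staircase
`⋃_{i ≤ k} (iP)_ℤ × ((k - i)Q)_ℤ`, and inclusion–exclusion along the staircase, whose consecutive
steps meet in `(iP)_ℤ × ((k - 1 - i)Q)_ℤ`, gives the formula.
-/

theorem span_convexHull {𝕜 E : Type*} [Semiring 𝕜] [PartialOrder 𝕜] [AddCommMonoid E]
    [Module 𝕜 E] (s : Set E) : Submodule.span 𝕜 (convexHull 𝕜 s) = Submodule.span 𝕜 s :=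
  le_antisymm
    (Submodule.span_le.2 (convexHull_min Submodule.subset_span (Submodule.span 𝕜 s).convex))
    (Submodule.span_mono (subset_convexHull 𝕜 s))

theorem preimage_coe_convexHull {𝕜 E : Type*} [Ring 𝕜] [PartialOrder 𝕜] [AddCommGroup E]
    [Module 𝕜 E] {W : Submodule 𝕜 E} {s : Set E} (hs : s ⊆ W) :
    ((↑) : W → E) ⁻¹' convexHull 𝕜 s = convexHull 𝕜 (((↑) : W → E) ⁻¹' s) := by
  have h := W.subtype.image_convexHull ((↑) ⁻¹' s)
  rw [Submodule.coe_subtype, image_preimage_eq_of_subset (by simpa using hs)] at h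
  rw [← h, preimage_image_eq _ Subtype.val_injective]

section Convex

variable {𝕜 E : Type*} [Field 𝕜] [LinearOrder 𝕜] [IsStrictOrderedRing 𝕜]
  [AddCommGroup E] [Module 𝕜 E]

theorem smul_set_subset_smul_set_of_le {P : Set E} (hP : Convex 𝕜 P) (h0 : (0 : E) ∈ P)
    {s t : 𝕜} (hs : 0 ≤ s) (hst : s ≤ t) : s • P ⊆ t • P := by
  rw [show t = s + (t - s) by ring, hP.add_smul hs (sub_nonneg.2 hst)]
  exact Set.subset_add_left _ (zero_mem_smul_set h0)

theorem add_mem_smul_convexHull_union {P Q : Set E} {x y : E} {s t : 𝕜} (hs : 0 ≤ s)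
    (ht : 0 ≤ t) (hx : x ∈ s • P) (hy : y ∈ t • Q) :
    x + y ∈ (s + t) • convexHull 𝕜 (P ∪ Q) := by
  rw [(convex_convexHull 𝕜 _).add_smul hs ht]
  exact add_mem_add (smul_set_mono (subset_union_left.trans (subset_convexHull 𝕜 _)) hx)
    (smul_set_mono (subset_union_right.trans (subset_convexHull 𝕜 _)) hy)

theorem exists_of_mem_smul_convexHull_union {P Q : Set E} (hP : Convex 𝕜 P) (hQ : Convex 𝕜 Q)
    (hPne : P.Nonempty) (hQne : Q.Nonempty) {k : 𝕜} (hk : 0 ≤ k) {m : E}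
    (hm : m ∈ k • convexHull 𝕜 (P ∪ Q)) :
    ∃ s t : 𝕜, 0 ≤ s ∧ 0 ≤ t ∧ s + t = k ∧ ∃ x ∈ s • P, ∃ y ∈ t • Q, m = x + y := by
  obtain ⟨z, hz, rfl⟩ := hm
  rw [hP.convexHull_union hQ hPne hQne] at hz
  obtain ⟨p, hp, q, hq, a, b, ha, hb, hab, rfl⟩ := mem_convexJoin.1 hz
  refine ⟨k * a, k * b, by positivity, by positivity, by rw [← mul_add, hab, mul_one],
    _, smul_mem_smul_set hp, _, smul_mem_smul_set hq, ?_⟩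
  simp only [smul_add, smul_smul]

end Convex

theorem smul_set_subset_span {R M : Type*} [Semiring R] [AddCommMonoid M] [Module R M]
    (s : Set M) (r : R) : r • s ⊆ Submodule.span R s := by
  rintro _ ⟨x, hx, rfl⟩
  exact Submodule.smul_mem _ r (Submodule.subset_span hx)

theorem injOn_add_of_disjoint {R M : Type*} [Ring R] [AddCommGroup M] [Module R M]
    {U W : Submodule R M} (h : Disjoint U W) :
    Set.InjOn (fun z : M × M => z.1 + z.2) ((U : Set M) ×ˢ (W : Set M)) := by
  rintro ⟨a, b⟩ ⟨ha, hb⟩ ⟨x, y⟩ ⟨hx, hy⟩ hab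
  have hdiff : a - x = y - b := by
    simp only at hab
    rw [sub_eq_sub_iff_add_eq_add, hab, add_comm]
  have hax : a - x = 0 := Submodule.disjoint_def.1 h _ (sub_mem ha hx) (hdiff ▸ sub_mem hy hb)
  exact Prod.ext (sub_eq_zero.1 hax) (sub_eq_zero.1 (hdiff ▸ hax)).symm

section Polyhedron

variable {𝕜 E : Type*} [Field 𝕜] [LinearOrder 𝕜] [IsStrictOrderedRing 𝕜]
  [AddCommGroup E] [Module 𝕜 E] {V : Set E} {φ : Module.Dual 𝕜 E} {x : E} {s : 𝕜}

variable (𝕜) in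
def polarSet (V : Set E) : Set (Module.Dual 𝕜 E) := {φ | ∀ v ∈ V, φ v ≤ 1}

def tightSet (V : Set E) (φ : Module.Dual 𝕜 E) : Set E := {v ∈ V | φ v = 1}

theorem mem_extremePoints_polarSet (hφ : φ ∈ polarSet 𝕜 V)
    (hspan : Submodule.span 𝕜 (tightSet V φ) = ⊤) :
    φ ∈ (polarSet 𝕜 V).extremePoints 𝕜 := by
  refine mem_extremePoints_iff_left.2 ⟨hφ, fun χ₁ h₁ χ₂ h₂ ⟨a, b, ha, hb, hab, hφeq⟩ => ?_⟩
  refine LinearMap.ext_on hspan fun v ⟨hv, hφv⟩ => ?_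
  have hsum : a * χ₁ v + b * χ₂ v = 1 := by
    rw [← hφv, ← hφeq]
    rfl
  nlinarith [h₁ v hv, h₂ v hv]

theorem exists_mem_polarSet_span_tightSet_lt (hV : V.Finite) (hφ : φ ∈ polarSet 𝕜 V)
    {σ : Module.Dual 𝕜 E} (hσ : Submodule.span 𝕜 (tightSet V φ) ≤ LinearMap.ker σ)
    (hσx : 0 ≤ σ x) (hσV : ∃ v ∈ V, 0 < σ v) :
    ∃ φ' ∈ polarSet 𝕜 V, φ x ≤ φ' x ∧
      Submodule.span 𝕜 (tightSet V φ) < Submodule.span 𝕜 (tightSet V φ') := by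
  -- move from `φ` along `σ` until a first new inequality `φ' v₀ ≤ 1` becomes tight
  obtain ⟨v₀, ⟨hv₀, hσv₀⟩, hmin⟩ := Set.exists_min_image {v ∈ V | 0 < σ v}
    (fun v => (1 - φ v) / σ v) (hV.sep _) hσV
  set t := (1 - φ v₀) / σ v₀
  have ht : 0 ≤ t := div_nonneg (sub_nonneg.2 (hφ v₀ hv₀)) hσv₀.le
  have htight : tightSet V φ ⊆ tightSet V (φ + t • σ) := fun v ⟨hv, hφv⟩ =>
    ⟨hv, by simp [hφv, LinearMap.mem_ker.1 (hσ (Submodule.subset_span ⟨hv, hφv⟩))]⟩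
  have hv₀tight : v₀ ∈ tightSet V (φ + t • σ) := ⟨hv₀, by simp [t, hσv₀.ne']⟩
  refine ⟨φ + t • σ, fun v hv => ?_, by simpa using mul_nonneg ht hσx, ?_⟩
  · rcases le_or_gt (σ v) 0 with hσv | hσv
    · simpa using add_le_of_le_of_nonpos (hφ v hv) (mul_nonpos_of_nonneg_of_nonpos ht hσv)
    · have := (le_div_iff₀ hσv).1 (hmin v ⟨hv, hσv⟩)
      simp only [LinearMap.add_apply, LinearMap.smul_apply, smul_eq_mul]
      linarith
  · refine (Submodule.span_mono htight).lt_of_ne fun heq => hσv₀.ne' ?_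
    exact hσ (heq ▸ Submodule.subset_span hv₀tight)

theorem exists_dual_pos_of_span_tightSet_ne_top (hV : Submodule.span 𝕜 V = ⊤) (hs : 0 ≤ s)
    (hx : x ∈ s • convexHull 𝕜 V) (hT : Submodule.span 𝕜 (tightSet V φ) ≠ ⊤) :
    ∃ σ : Module.Dual 𝕜 E, Submodule.span 𝕜 (tightSet V φ) ≤ LinearMap.ker σ ∧ 0 ≤ σ x ∧
      ∃ v ∈ V, 0 < σ v := by
  have hcone : ∀ τ : Module.Dual 𝕜 E, (∀ v ∈ V, τ v ≤ 0) → τ x ≤ 0 := by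
    intro τ hτ
    obtain ⟨p, hp, rfl⟩ := hx
    rw [map_smul, smul_eq_mul]
    exact mul_nonpos_of_nonneg_of_nonpos hs
      (convexHull_min hτ (convex_halfSpace_le τ.isLinear 0) hp)
  suffices key : ∀ τ : Module.Dual 𝕜 E, τ ≠ 0 →
      Submodule.span 𝕜 (tightSet V φ) ≤ LinearMap.ker τ → 0 ≤ τ x →
      ∃ σ : Module.Dual 𝕜 E, Submodule.span 𝕜 (tightSet V φ) ≤ LinearMap.ker σ ∧
        0 ≤ σ x ∧ ∃ v ∈ V, 0 < σ v by
    obtain ⟨ψ, hψ, hψT⟩ := (Submodule.span 𝕜 (tightSet V φ)).exists_le_ker_of_lt_top hT.lt_top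
    rcases le_total 0 (ψ x) with hψx | hψx
    · exact key ψ hψ hψT hψx
    · exact key (-ψ) (neg_ne_zero.2 hψ) (by rwa [LinearMap.ker_neg]) (by simpa using hψx)
  intro τ hτ hτT hτx
  by_cases hpos : ∃ v ∈ V, 0 < τ v
  · exact ⟨τ, hτT, hτx, hpos⟩
  push Not at hpos
  -- `τ ≤ 0` on `V` forces `τ x = 0`, and `-τ` is positive somewhere on the spanning set `V`
  refine ⟨-τ, by rwa [LinearMap.ker_neg], by simpa using hcone τ hpos, ?_⟩
  by_contra hneg
  push Not at hneg
  exact hτ (LinearMap.ext_on hV fun v hv => le_antisymm (hpos v hv) (by simpa using hneg v hv))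

theorem exists_mem_extremePoints_polarSet_le [FiniteDimensional 𝕜 E] (hVfin : V.Finite)
    (hV : Submodule.span 𝕜 V = ⊤) (hs : 0 ≤ s) (hx : x ∈ s • convexHull 𝕜 V)
    (hφ : φ ∈ polarSet 𝕜 V) : ∃ φ' ∈ (polarSet 𝕜 V).extremePoints 𝕜, φ x ≤ φ' x := by
  induction hd : Module.finrank 𝕜 E - Module.finrank 𝕜 (Submodule.span 𝕜 (tightSet V φ))
    using Nat.strong_induction_on generalizing φ with
  | _ d ih =>
    by_cases hT : Submodule.span 𝕜 (tightSet V φ) = ⊤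
    · exact ⟨φ, mem_extremePoints_polarSet hφ hT, le_rfl⟩
    obtain ⟨σ, hσT, hσx, hσV⟩ := exists_dual_pos_of_span_tightSet_ne_top hV hs hx hT
    obtain ⟨φ', hφ', hle, hlt⟩ := exists_mem_polarSet_span_tightSet_lt hVfin hφ hσT hσx hσV
    have hrank := Submodule.finrank_lt_finrank_of_lt hlt
    have hrank' := Submodule.finrank_le (Submodule.span 𝕜 (tightSet V φ'))
    obtain ⟨φ'', hφ'', hle'⟩ := ih _ (by omega) hφ' rfl
    exact ⟨φ'', hφ'', hle.trans hle'⟩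

end Polyhedron

theorem exists_le_one_lt_of_notMem_smul {E : Type*} [NormedAddCommGroup E] [NormedSpace ℝ E]
    {P : Set E} (hPc : IsCompact P) (hconv : Convex ℝ P) (h0 : (0 : E) ∈ P) {x : E} {r : ℝ}
    (hr : 0 ≤ r) (hx : x ∉ r • P) : ∃ f : E →L[ℝ] ℝ, (∀ p ∈ P, f p ≤ 1) ∧ r < f x := by
  obtain ⟨f, u, hf, hfx⟩ := geometric_hahn_banach_closed_point (hconv.smul r)
    (hPc.smul r).isClosed hx
  have hu : 0 < u := by simpa using hf 0 (zero_mem_smul_set h0)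
  obtain ⟨p₀, hp₀, hmax⟩ := hPc.exists_isMaxOn ⟨0, h0⟩ f.continuous.continuousOn
  set M := f p₀
  have hM : 0 ≤ M := by simpa using hmax h0
  have hrM : r * M < u := by simpa using hf _ (smul_mem_smul_set hp₀ (a := r))
  -- `c = (1 + r) / (M + u)` satisfies `c * M ≤ 1` and `r < c * u`, both because `r * M < u`
  refine ⟨((1 + r) / (M + u)) • f, fun p hp => ?_, ?_⟩
  · have hfp : f p ≤ M := hmax hp
    rw [smul_apply, smul_eq_mul, div_mul_eq_mul_div, div_le_one (by positivity)]
    nlinarith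
  · rw [smul_apply, smul_eq_mul, div_mul_eq_mul_div, lt_div_iff₀ (by positivity)]
    nlinarith

section FieldExtension

variable {K L ι : Type*} [Field K] [Field L] [Algebra K L]

theorem algebraMap_comp_mem_span {s : Set (ι → K)} {v : ι → K}
    (hv : v ∈ Submodule.span K s) :
    algebraMap K L ∘ v ∈ Submodule.span L ((algebraMap K L ∘ ·) '' s) := by
  have h := Submodule.mem_map_of_mem (f := (Algebra.linearMap K L).compLeft ι) hv
  rw [Submodule.map_span] at h
  exact Submodule.span_le_restrictScalars K L _ h

theorem disjoint_span_algebraMap_comp [Finite ι] {s t : Set (ι → K)}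
    (h : Disjoint (Submodule.span K s) (Submodule.span K t)) :
    Disjoint (Submodule.span L ((algebraMap K L ∘ ·) '' s))
      (Submodule.span L ((algebraMap K L ∘ ·) '' t)) := by
  obtain ⟨bs, -, hspan_s, hli_s⟩ := exists_linearIndependent K s
  obtain ⟨bt, -, hspan_t, hli_t⟩ := exists_linearIndependent K t
  rw [← hspan_s, ← hspan_t] at h
  have hli : LinearIndepOn K id (bs ∪ bt) := LinearIndepOn.id_union hli_s hli_t h
  have hliL : LinearIndepOn L (algebraMap K L ∘ ·) (bs ∪ bt) :=
    linearIndependent_algebraMap_comp_iff.2 hli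
  have hdisj : Disjoint bs bt := Set.disjoint_left.2 fun v hvs hvt =>
    hli_s.ne_zero ⟨v, hvs⟩ (Submodule.disjoint_def.1 h v (Submodule.subset_span hvs)
      (Submodule.subset_span hvt))
  have hmono : ∀ {b u : Set (ι → K)}, Submodule.span K b = Submodule.span K u →
      Submodule.span L ((algebraMap K L ∘ ·) '' u) ≤
        Submodule.span L ((algebraMap K L ∘ ·) '' b) :=
    fun hbu => Submodule.span_le.2 fun _ ⟨v, hv, hfv⟩ =>
      hfv ▸ algebraMap_comp_mem_span (hbu ▸ Submodule.subset_span hv)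
  exact ((linearIndepOn_union_iff hdisj).1 hliL).2.2.mono (hmono hspan_s) (hmono hspan_t)

end FieldExtension

theorem card_biUnion_product_antidiagonal {α β : Type*} [DecidableEq α] [DecidableEq β]
    {A : ℕ → Finset α} {B : ℕ → Finset β} (hA : Monotone A) (hB : Monotone B) (k : ℕ) :
    (((Finset.range (k + 1)).biUnion fun i => A i ×ˢ B (k - i)).card : ℤ) =
      ∑ i ∈ Finset.range (k + 1), ((A i).card * (B (k - i)).card : ℤ) -
        ∑ i ∈ Finset.range k, ((A i).card * (B (k - 1 - i)).card : ℤ) := by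
  suffices key : ∀ j ≤ k, ((Finset.range (j + 1)).biUnion fun i => A i ×ˢ B (k - i)).card +
      ∑ i ∈ Finset.range j, (A i).card * (B (k - 1 - i)).card =
        ∑ i ∈ Finset.range (j + 1), (A i).card * (B (k - i)).card by
    rw [eq_sub_iff_add_eq]
    exact_mod_cast key k le_rfl
  intro j hj
  induction j with
  | zero => simp
  | succ j ih =>
    have hinter : (A (j + 1) ×ˢ B (k - (j + 1))) ∩
        (Finset.range (j + 1)).biUnion (fun i => A i ×ˢ B (k - i)) = A j ×ˢ B (k - 1 - j) := by
      ext ⟨a, b⟩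
      simp only [Finset.mem_inter, Finset.mem_product, Finset.mem_biUnion, Finset.mem_range]
      constructor
      · rintro ⟨⟨-, hb⟩, i, hi, ha, -⟩
        exact ⟨hA (Nat.lt_succ_iff.1 hi) ha, by rwa [Nat.sub_sub, add_comm 1 j]⟩
      · rintro ⟨ha, hb⟩
        exact ⟨⟨hA j.le_succ ha, by rwa [Nat.sub_sub, add_comm 1 j] at hb⟩, j, j.lt_succ_self,
          ha, hB (by omega) hb⟩
    have hunion := Finset.card_union_add_card_inter (A (j + 1) ×ˢ B (k - (j + 1)))
      ((Finset.range (j + 1)).biUnion fun i => A i ×ˢ B (k - i))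
    rw [hinter, Finset.card_product, Finset.card_product] at hunion
    rw [Finset.sum_range_succ _ (j + 1), Finset.sum_range_succ _ j,
      Finset.range_add_one (n := j + 1), Finset.biUnion_insert]
    have := ih (by omega)
    omega

theorem ncard_biUnion_prod_antidiagonal {α β : Type*} {A : ℕ → Set α} {B : ℕ → Set β}
    (hA : Monotone A) (hB : Monotone B) (hAfin : ∀ i, (A i).Finite) (hBfin : ∀ i, (B i).Finite)
    (k : ℕ) :
    ((⋃ i ∈ Finset.range (k + 1), A i ×ˢ B (k - i)).ncard : ℤ) =
      ∑ i ∈ Finset.range (k + 1), ((A i).ncard * (B (k - i)).ncard : ℤ) -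
        ∑ i ∈ Finset.range k, ((A i).ncard * (B (k - 1 - i)).ncard : ℤ) := by
  have h := card_biUnion_product_antidiagonal (A := fun i => (hAfin i).toFinset)
    (B := fun i => (hBfin i).toFinset)
    (fun _ _ hij => (hAfin _).toFinset_subset_toFinset.2 (hA hij))
    (fun _ _ hij => (hBfin _).toFinset_subset_toFinset.2 (hB hij)) k
  simp only [Set.ncard_eq_toFinset_card _ (hAfin _), Set.ncard_eq_toFinset_card _ (hBfin _)]
  rw [← h, ← Set.ncard_coe_finset]
  simp

theorem IsLat.add {x y : Fin n → ℝ} (hx : IsLat x) (hy : IsLat y) : IsLat (x + y) := fun i => by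
  obtain ⟨a, ha⟩ := hx i
  obtain ⟨b, hb⟩ := hy i
  exact ⟨a + b, by simp [ha, hb]⟩

theorem isLat_iff_mem_span_int {m : ℕ} (x : Fin m → ℝ) :
    IsLat x ↔ x ∈ Submodule.span ℤ (range (Pi.basisFun ℝ (Fin m))) := by
  simp [Module.Basis.mem_span_iff_repr_mem, IsLat, eq_comm]

theorem latt_finite {m : ℕ} {S : Set (Fin m → ℝ)} (hS : Bornology.IsBounded S) :
    (latt S).Finite :=
  (ZSpan.setFinite_inter (Pi.basisFun ℝ (Fin m)) hS).subset fun x hx =>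
    ⟨hx.1, (isLat_iff_mem_span_int x).1 hx.2⟩

theorem ehr_eq_ncard_latt {P : Set (Fin n → ℝ)} (h0 : (0 : Fin n → ℝ) ∈ P) (k : ℕ) :
    ehr P k = (latt ((k : ℝ) • P)).ncard := by
  rcases eq_or_ne k 0 with rfl | hk
  · have : latt ((0 : ℝ) • P) = {0} := by
      ext x
      simp only [latt, zero_smul_set ⟨0, h0⟩, mem_ofPred_eq, Set.mem_zero, mem_singleton_iff,
        and_iff_left_iff_imp]
      rintro rfl i
      exact ⟨0, by simp⟩
    simp [ehr, this]
  · simp [ehr, hk]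

theorem monotone_latt_natCast_smul {R : Set (Fin n → ℝ)} (hR : Convex ℝ R)
    (h0 : (0 : Fin n → ℝ) ∈ R) : Monotone fun i : ℕ => latt ((i : ℝ) • R) :=
  fun i _ hij _ ⟨hx, hxlat⟩ =>
    ⟨smul_set_subset_smul_set_of_le hR h0 i.cast_nonneg (Nat.cast_le.2 hij) hx, hxlat⟩

section Polytope

variable {P V : Set (Fin n → ℝ)}

theorem preimage_coe_span_eq_convexHull (hPV : P = convexHull ℝ V) :
    ((↑) : Submodule.span ℝ P → _) ⁻¹' P = convexHull ℝ ((↑) ⁻¹' V) := by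
  rw [hPV, preimage_coe_convexHull ((subset_convexHull ℝ V).trans Submodule.subset_span)]

theorem dualSet_eq_polarSet (hPV : P = convexHull ℝ V) :
    dualSet P = polarSet ℝ (((↑) : Submodule.span ℝ P → _) ⁻¹' V) := by
  have hVP : V ⊆ P := hPV ▸ subset_convexHull ℝ V
  ext φ
  refine ⟨fun hφ v hv => hφ v (hVP hv), fun hφ a ha => ?_⟩
  exact convexHull_min hφ (convex_halfSpace_le φ.isLinear 1)
    (preimage_coe_span_eq_convexHull hPV ▸ ha)

theorem span_preimage_coe_span_eq_top (hPV : P = convexHull ℝ V) :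
    Submodule.span ℝ (((↑) : Submodule.span ℝ P → _) ⁻¹' V) = ⊤ := by
  have h := Submodule.span_span_coe_preimage (R := ℝ) (s := P)
  rwa [preimage_coe_span_eq_convexHull hPV, span_convexHull] at h

theorem mem_natFloor_smul_of_isLat (hV : V.Finite) (hPV : P = convexHull ℝ V)
    (hPdual : DualIsLatticePolyhedron P) (h0 : (0 : Fin n → ℝ) ∈ P) {x : Fin n → ℝ}
    (hx : IsLat x) {s : ℝ} (hs : 0 ≤ s) (hxs : x ∈ s • P) : x ∈ (⌊s⌋₊ : ℝ) • P := by
  obtain ⟨p, hp, rfl⟩ := hxs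
  set p' : Submodule.span ℝ P := ⟨p, Submodule.subset_span hp⟩
  have hp' : p' ∈ convexHull ℝ ((↑) ⁻¹' V) := preimage_coe_span_eq_convexHull hPV ▸ hp
  have hbound : ∀ φ ∈ dualSet P, φ (s • p') ≤ ⌊s⌋₊ := by
    intro φ hφ
    rw [dualSet_eq_polarSet hPV] at hφ
    obtain ⟨φ', hφ', hle⟩ := exists_mem_extremePoints_polarSet_le
      (hV.preimage Subtype.val_injective.injOn) (span_preimage_coe_span_eq_top hPV) hs
      (smul_mem_smul_set hp') hφ
    rw [← dualSet_eq_polarSet hPV] at hφ'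
    obtain ⟨z, hz⟩ := hPdual φ' hφ' (s • p') hx
    have hzs : (z : ℝ) ≤ s := by
      simpa [← hz, smul_eq_mul] using mul_le_of_le_one_right hs (hφ'.1 p' hp)
    have hzfloor : z ≤ (⌊s⌋₊ : ℤ) := Int.natCast_floor_eq_floor hs ▸ Int.le_floor.2 hzs
    exact hle.trans (hz ▸ by exact_mod_cast hzfloor)
  by_contra hnot
  obtain ⟨f, hfP, hfx⟩ := exists_le_one_lt_of_notMem_smul
    (hPV ▸ hV.isCompact_convexHull (𝕜 := ℝ)) (hPV ▸ convex_convexHull ℝ V) h0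
    (Nat.cast_nonneg _) hnot
  exact (hbound (f.toLinearMap ∘ₗ (Submodule.span ℝ P).subtype) fun a ha => hfP a ha).not_gt hfx

end Polytope

theorem eq_zero_of_isLat_of_mem_span {P Q : Set (Fin n → ℝ)} (hfree : IsFreeSum P Q)
    {x : Fin n → ℝ} (hx : IsLat x) (hxP : x ∈ Submodule.span ℝ P)
    (hxQ : x ∈ Submodule.span ℝ Q) : x = 0 := by
  have h0 : IsLat (0 : Fin n → ℝ) := fun _ => ⟨0, by simp⟩
  have hxPQ : x ∈ Submodule.span ℝ (P ∪ Q) := Submodule.span_mono subset_union_left hxP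
  exact congrArg Prod.fst <| (hfree.2.2 x hxPQ hx).unique (y₁ := (x, 0)) (y₂ := (0, x))
    ⟨⟨hxP, hx⟩, ⟨Submodule.zero_mem _, h0⟩, (add_zero x).symm⟩
    ⟨⟨Submodule.zero_mem _, h0⟩, ⟨hxQ, hx⟩, (zero_add x).symm⟩

theorem disjoint_span_of_isFreeSum {P Q : Set (Fin n → ℝ)} (hP : IsRatPolytope P)
    (hQ : IsRatPolytope Q) (hfree : IsFreeSum P Q) :
    Disjoint (Submodule.span ℝ P) (Submodule.span ℝ Q) := by
  set f : (Fin n → ℚ) → (Fin n → ℝ) := (algebraMap ℚ ℝ ∘ ·)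
  have hrat : ∀ {R}, IsRatPolytope R →
      Submodule.span ℝ R = Submodule.span ℝ (f '' (f ⁻¹' R)) := by
    rintro _ ⟨V, hV, rfl⟩
    refine le_antisymm ?_ (Submodule.span_mono (image_preimage_subset _ _))
    rw [span_convexHull]
    refine Submodule.span_mono fun v hv => ?_
    obtain ⟨w, hw⟩ : ∃ w : Fin n → ℚ, f w = v :=
      ⟨fun i => (hV v hv i).choose, funext fun i => (hV v hv i).choose_spec.symm⟩
    exact ⟨w, by rw [mem_preimage, hw]; exact subset_convexHull ℝ _ hv, hw⟩
  rw [hrat hP, hrat hQ]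
  refine disjoint_span_algebraMap_comp (Submodule.disjoint_def.2 fun v hvP hvQ => ?_)
  obtain ⟨b, hb⟩ := IsLocalization.exist_integer_multiples_of_finite (nonZeroDivisors ℤ) v
  have hlat : IsLat (f ((b : ℤ) • v)) := fun i => by
    obtain ⟨z, hz⟩ := hb i
    refine ⟨z, ?_⟩
    have := congrArg (Rat.cast : ℚ → ℝ) hz
    simp only [algebraMap_int_eq, eq_intCast, Rat.cast_intCast, zsmul_eq_mul, Rat.cast_mul] at this
    simp [f, this]
  have hzero := eq_zero_of_isLat_of_mem_span hfree hlat
    (hrat hP ▸ algebraMap_comp_mem_span (Submodule.smul_mem _ _ hvP))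
    (hrat hQ ▸ algebraMap_comp_mem_span (Submodule.smul_mem _ _ hvQ))
  have hbv : (b : ℤ) • v = 0 := funext fun i => by simpa [f] using congrFun hzero i
  exact (smul_eq_zero.1 hbv).resolve_left (nonZeroDivisors.coe_ne_zero b)

theorem latt_smul_convexHull_union {P Q : Set (Fin n → ℝ)} (hP : Convex ℝ P) (hQ : Convex ℝ Q)
    (hfree : IsFreeSum P Q) (hdisj : Disjoint (Submodule.span ℝ P) (Submodule.span ℝ Q))
    (hfloor : ∀ x, IsLat x → ∀ s : ℝ, 0 ≤ s → x ∈ s • P → x ∈ (⌊s⌋₊ : ℝ) • P) (k : ℕ) :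
    latt ((k : ℝ) • convexHull ℝ (P ∪ Q)) = (fun z => z.1 + z.2) ''
      ⋃ i ∈ Finset.range (k + 1), latt ((i : ℝ) • P) ×ˢ latt (((k - i : ℕ) : ℝ) • Q) := by
  ext m
  constructor
  · rintro ⟨hm, hmlat⟩
    obtain ⟨s, t, hs, ht, hst, x, hx, y, hy, rfl⟩ := exists_of_mem_smul_convexHull_union hP hQ
      ⟨0, hfree.1⟩ ⟨0, hfree.2.1⟩ k.cast_nonneg hm
    have hxP := smul_set_subset_span P s hx
    have hyQ := smul_set_subset_span Q t hy
    obtain ⟨⟨a, b⟩, ⟨⟨haP, halat⟩, ⟨hbQ, hblat⟩, hab⟩, -⟩ := hfree.2.2 (x + y)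
      (add_mem (Submodule.span_mono subset_union_left hxP)
        (Submodule.span_mono subset_union_right hyQ)) hmlat
    obtain ⟨rfl, rfl⟩ := Prod.ext_iff.1 <| injOn_add_of_disjoint hdisj
      (show (a, b) ∈ _ from ⟨haP, hbQ⟩) (show (x, y) ∈ _ from ⟨hxP, hyQ⟩) hab.symm
    have hsk : ⌊s⌋₊ ≤ k := Nat.floor_le_of_le (by linarith)
    have htk : t ≤ ((k - ⌊s⌋₊ : ℕ) : ℝ) := by
      rw [Nat.cast_sub hsk]
      linarith [Nat.floor_le hs]
    exact ⟨(a, b), mem_iUnion₂.2 ⟨⌊s⌋₊, Finset.mem_range.2 (Nat.lt_succ_of_le hsk),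
      ⟨hfloor a halat s hs hx, halat⟩,
      ⟨smul_set_subset_smul_set_of_le hQ hfree.2.1 ht htk hy, hblat⟩⟩, rfl⟩
  · rintro ⟨⟨x, y⟩, hxy, rfl⟩
    obtain ⟨i, hi, ⟨hx, hxlat⟩, ⟨hy, hylat⟩⟩ := mem_iUnion₂.1 hxy
    refine ⟨?_, hxlat.add hylat⟩
    have hik : i ≤ k := Nat.lt_succ_iff.1 (Finset.mem_range.1 hi)
    simpa [Nat.cast_sub hik] using add_mem_smul_convexHull_union i.cast_nonneg
      (k - i).cast_nonneg hx hy

theorem ncard_latt_smul_convexHull_union {P Q : Set (Fin n → ℝ)} (hP : Convex ℝ P)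
    (hQ : Convex ℝ Q) (hfree : IsFreeSum P Q)
    (hdisj : Disjoint (Submodule.span ℝ P) (Submodule.span ℝ Q))
    (hfloor : ∀ x, IsLat x → ∀ s : ℝ, 0 ≤ s → x ∈ s • P → x ∈ (⌊s⌋₊ : ℝ) • P) (k : ℕ) :
    (latt ((k : ℝ) • convexHull ℝ (P ∪ Q))).ncard =
      (⋃ i ∈ Finset.range (k + 1), latt ((i : ℝ) • P) ×ˢ latt (((k - i : ℕ) : ℝ) • Q)).ncard := by
  rw [latt_smul_convexHull_union hP hQ hfree hdisj hfloor k]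
  refine ((injOn_add_of_disjoint hdisj).mono fun z hz => ?_).ncard_image
  obtain ⟨i, -, ⟨hx, -⟩, ⟨hy, -⟩⟩ := mem_iUnion₂.1 hz
  exact ⟨smul_set_subset_span P _ hx, smul_set_subset_span Q _ hy⟩

theorem braun_ehrhart_of_dual_lattice_general {n : ℕ} (P Q : Set (Fin n → ℝ))
    (hP : IsRatPolytope P) (hQ : IsRatPolytope Q) (hPdual : DualIsLatticePolyhedron P)
    (hfree : IsFreeSum P Q) :
    ∀ k : ℕ,
      (ehr (convexHull ℝ (P ∪ Q)) k : ℤ) =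
        (∑ i ∈ Finset.range (k + 1), (ehr P i : ℤ) * (ehr Q (k - i) : ℤ)) -
          ∑ i ∈ Finset.range k, (ehr P i : ℤ) * (ehr Q (k - 1 - i) : ℤ) := by
  intro k
  have hdisj := disjoint_span_of_isFreeSum hP hQ hfree
  obtain ⟨VP, -, hPV⟩ := hP
  obtain ⟨VQ, -, hQV⟩ := hQ
  have hPconv : Convex ℝ P := hPV ▸ convex_convexHull ℝ _
  have hQconv : Convex ℝ Q := hQV ▸ convex_convexHull ℝ _
  have hPfin : ∀ i : ℕ, (latt ((i : ℝ) • P)).Finite := fun i => latt_finite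
    ((hPV ▸ VP.finite_toSet.isCompact_convexHull (𝕜 := ℝ)).smul (i : ℝ)).isBounded
  have hQfin : ∀ i : ℕ, (latt ((i : ℝ) • Q)).Finite := fun i => latt_finite
    ((hQV ▸ VQ.finite_toSet.isCompact_convexHull (𝕜 := ℝ)).smul (i : ℝ)).isBounded
  have hfloor : ∀ x, IsLat x → ∀ s : ℝ, 0 ≤ s → x ∈ s • P → x ∈ (⌊s⌋₊ : ℝ) • P :=
    fun _ hx _ hs hxs => mem_natFloor_smul_of_isLat VP.finite_toSet hPV hPdual hfree.1 hx hs hxs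
  rw [ehr_eq_ncard_latt (subset_convexHull ℝ _ (Or.inl hfree.1)),
    ncard_latt_smul_convexHull_union hPconv hQconv hfree hdisj hfloor,
    ncard_biUnion_prod_antidiagonal (monotone_latt_natCast_smul hPconv hfree.1)
      (monotone_latt_natCast_smul hQconv hfree.2.1) hPfin hQfin]
  simp only [ehr_eq_ncard_latt hfree.1, ehr_eq_ncard_latt hfree.2.1]

/-- Corollary 3.5 (Ehrhart-series Braun formula for rational polytopes
with lattice polyhedral dual). -/
theorem braun_ehrhart_of_dual_lattice {n : ℕ} (hn : 1 ≤ n) (P Q : Set (Fin n → ℝ))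
    (hP : IsRatPolytope P) (hQ : IsRatPolytope Q) (hPdual : DualIsLatticePolyhedron P)
    (hfree : IsFreeSum P Q) :
    ∀ k : ℕ,
      (ehr (convexHull ℝ (P ∪ Q)) k : ℤ) =
        (∑ i ∈ Finset.range (k + 1), (ehr P i : ℤ) * (ehr Q (k - i) : ℤ)) -
          ∑ i ∈ Finset.range k, (ehr P i : ℤ) * (ehr Q (k - 1 - i) : ℤ) :=
  braun_ehrhart_of_dual_lattice_general P Q hP hQ hPdual hfree

end ArxivFreeSum
end
end

section
/- Let J ⊂ ℝ^n be a compact convex set containing the origin. Then llenv(cone J) = (lenv(cone J))_ℤ if and only if (lenv(cone J))_ℤ = (cone J)_ℤ \ (cone J + e_{n+1})_ℤ. -/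
open Set Pointwise
open scoped Classical

noncomputable section

namespace ArxivFreeSum

variable {n : ℕ}

/-! Write `h(x) = envHeight J x = max {λ | x - λ e_{n+1} ∈ cone J}`, so that
`ε_J(x) = x - h(x) e_{n+1}` and `lenv(cone J)` is the zero set of `h`. Since
`h(x - z e_{n+1}) = h(x) - z`, `llenv(cone J) = lenv(cone J)_ℤ` says that `h` is integer-valued on
lattice points of the cone, while the other condition says that a lattice point with `h < 1` has
`h = 0`; the second gives the first at `x - ⌊h(x)⌋ e_{n+1}`. Compactness of `J` is what makes the
maximum attained: the cone over a compact set is closed. -/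

variable {J : Set (Fin n → ℝ)}

@[simp]
lemma emb_last (a : Fin n → ℝ) : emb a (Fin.last n) = 1 := by simp [emb]

@[simp]
lemma emb_castSucc (a : Fin n → ℝ) (j : Fin n) : emb a j.castSucc = a j := by simp [emb]

@[simp]
lemma eLast_last : eLast n (Fin.last n) = 1 := by simp [eLast]

@[simp]
lemma eLast_castSucc (j : Fin n) : eLast n j.castSucc = 0 := by
  simp [eLast]

lemma continuous_emb : Continuous (emb : (Fin n → ℝ) → Fin (n + 1) → ℝ) :=
  Continuous.finSnoc (A := fun _ => ℝ) continuous_id continuous_const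

lemma last_nonneg_of_mem_cone {x : Fin (n + 1) → ℝ} (hx : x ∈ cone J) : 0 ≤ x (Fin.last n) := by
  obtain ⟨l, a, -, hl, rfl⟩ := hx
  simpa using hl

lemma isClosed_cone (hJ : IsCompact J) : IsClosed (cone J) := by
  refine closure_subset_iff_isClosed.mp fun x hx => ?_
  set T := x (Fin.last n) + 1
  let K := (fun p : ℝ × (Fin n → ℝ) => p.1 • emb p.2) '' (Icc 0 T ×ˢ J)
  have hK : IsClosed K := ((isCompact_Icc.prod hJ).image
    (continuous_fst.smul (continuous_emb.comp continuous_snd))).isClosed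
  have hKcone : K ⊆ cone J := by
    rintro _ ⟨⟨l, a⟩, ⟨⟨hl, -⟩, ha⟩, rfl⟩
    exact ⟨l, a, ha, hl, rfl⟩
  have hU : IsOpen {y : Fin (n + 1) → ℝ | y (Fin.last n) < T} :=
    isOpen_lt (continuous_apply _) continuous_const
  have hconeK : {y : Fin (n + 1) → ℝ | y (Fin.last n) < T} ∩ cone J ⊆ K := by
    rintro _ ⟨hT, l, a, ha, hl, rfl⟩
    have hlT : l < T := by simpa using hT
    exact ⟨(l, a), ⟨⟨hl, hlT.le⟩, ha⟩, rfl⟩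
  have hxU : x (Fin.last n) < T := lt_add_one _
  exact hKcone (closure_minimal hconeK hK (hU.inter_closure ⟨hxU, hx⟩))

lemma add_smul_eLast_mem_cone (hJ : StarConvex ℝ 0 J) {x : Fin (n + 1) → ℝ} (hx : x ∈ cone J)
    {t : ℝ} (ht : 0 ≤ t) : x + t • eLast n ∈ cone J := by
  obtain ⟨l, a, ha, hl, rfl⟩ := hx
  rcases (add_nonneg hl ht).eq_or_lt with hlt | hlt
  · obtain rfl : t = 0 := by linarith
    simpa using ⟨l, a, ha, hl, rfl⟩
  -- `l • α(a) + t e_{n+1}` lies on the ray through `α(l / (l + t) • a)`.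
  refine ⟨l + t, (l / (l + t)) • a, ?_, hlt.le, ?_⟩
  · simpa using hJ ha (by positivity : 0 ≤ t / (l + t)) (by positivity)
      (by rw [← add_div, add_comm, div_self hlt.ne'])
  · ext i
    induction i using Fin.lastCases with
    | last => simp
    | cast j =>
      simp only [Pi.add_apply, Pi.smul_apply, emb_castSucc, eLast_castSucc, smul_eq_mul, mul_zero,
        add_zero]
      field_simp

def envHeight (J : Set (Fin n → ℝ)) (x : Fin (n + 1) → ℝ) : ℝ :=
  sSup {l : ℝ | x - l • eLast n ∈ cone J}

lemma eps_eq_sub_envHeight (x : Fin (n + 1) → ℝ) : eps J x = x - envHeight J x • eLast n := rfl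

lemma setOf_sub_smul_eLast_mem_cone (hJ : StarConvex ℝ 0 J) (hJc : IsCompact J)
    {x : Fin (n + 1) → ℝ} (hx : x ∈ cone J) :
    {l : ℝ | x - l • eLast n ∈ cone J} = Iic (envHeight J x) := by
  set S := {l : ℝ | x - l • eLast n ∈ cone J}
  have hbdd : BddAbove S := ⟨x (Fin.last n), fun l hl => by
    simpa using last_nonneg_of_mem_cone hl⟩
  have hclosed : IsClosed S :=
    (isClosed_cone hJc).preimage (continuous_const.sub (continuous_id.smul continuous_const))
  have hmax : envHeight J x ∈ S := hclosed.csSup_mem ⟨0, by simpa [S] using hx⟩ hbdd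
  refine Subset.antisymm (fun l hl => le_csSup hbdd hl) fun l hl => ?_
  have := add_smul_eLast_mem_cone hJ hmax (sub_nonneg.mpr hl)
  show x - l • eLast n ∈ cone J
  convert this using 1
  module

lemma sub_smul_eLast_mem_cone_iff (hJ : StarConvex ℝ 0 J) (hJc : IsCompact J)
    {x : Fin (n + 1) → ℝ} (hx : x ∈ cone J) {l : ℝ} :
    x - l • eLast n ∈ cone J ↔ l ≤ envHeight J x :=
  Set.ext_iff.mp (setOf_sub_smul_eLast_mem_cone hJ hJc hx) l

lemma envHeight_nonneg (hJ : StarConvex ℝ 0 J) (hJc : IsCompact J) {x : Fin (n + 1) → ℝ}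
    (hx : x ∈ cone J) : 0 ≤ envHeight J x :=
  (sub_smul_eLast_mem_cone_iff hJ hJc hx).mp (by simpa using hx)

lemma envHeight_sub_smul_eLast (hJ : StarConvex ℝ 0 J) (hJc : IsCompact J)
    {x : Fin (n + 1) → ℝ} (hx : x ∈ cone J) (c : ℝ) :
    envHeight J (x - c • eLast n) = envHeight J x - c := by
  have : {l : ℝ | x - c • eLast n - l • eLast n ∈ cone J} = Iic (envHeight J x - c) := by
    ext l
    rw [mem_ofPred_eq, sub_sub, ← add_smul, sub_smul_eLast_mem_cone_iff hJ hJc hx, mem_Iic,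
      le_sub_iff_add_le']
  rw [envHeight, this, csSup_Iic]

lemma mem_lenv_iff (hJ : StarConvex ℝ 0 J) (hJc : IsCompact J) {y : Fin (n + 1) → ℝ} :
    y ∈ lenv J ↔ y ∈ cone J ∧ envHeight J y = 0 := by
  constructor
  · rintro ⟨x, hx, rfl⟩
    refine ⟨(sub_smul_eLast_mem_cone_iff hJ hJc hx).mpr le_rfl, ?_⟩
    rw [eps_eq_sub_envHeight, envHeight_sub_smul_eLast hJ hJc hx, sub_self]
  · rintro ⟨hy, hy0⟩
    exact ⟨y, hy, by rw [eps_eq_sub_envHeight, hy0, zero_smul, sub_zero]⟩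

lemma mem_image_add_eLast_cone_iff (hJ : StarConvex ℝ 0 J) (hJc : IsCompact J)
    {y : Fin (n + 1) → ℝ} (hy : y ∈ cone J) :
    y ∈ (fun x => x + eLast n) '' cone J ↔ 1 ≤ envHeight J y := by
  rw [← sub_smul_eLast_mem_cone_iff hJ hJc hy, one_smul]
  exact ⟨by rintro ⟨x, hx, rfl⟩; simpa using hx, fun h => ⟨y - eLast n, h, sub_add_cancel _ _⟩⟩

lemma IsLat.sub_smul_eLast_iff {x : Fin (n + 1) → ℝ} (hx : IsLat x) {c : ℝ} :
    IsLat (x - c • eLast n) ↔ ∃ z : ℤ, c = z := by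
  constructor
  · intro h
    obtain ⟨z, hz⟩ := hx (Fin.last n)
    obtain ⟨w, hw⟩ := h (Fin.last n)
    simp only [Pi.sub_apply, Pi.smul_apply, eLast_last, smul_eq_mul, mul_one, hz] at hw
    exact ⟨z - w, by push_cast; linarith⟩
  · rintro ⟨z, rfl⟩ i
    obtain ⟨w, hw⟩ := hx i
    induction i using Fin.lastCases with
    | last => exact ⟨w - z, by simp [hw]⟩
    | cast j => exact ⟨w, by simp [hw]⟩

lemma llenv_eq_latt_lenv_iff (hJ : StarConvex ℝ 0 J) (hJc : IsCompact J) :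
    llenv J = latt (lenv J) ↔ ∀ x ∈ latt (cone J), ∃ z : ℤ, envHeight J x = z := by
  have hlatt_lenv : latt (lenv J) ⊆ llenv J := by
    rintro y ⟨hy, hyl⟩
    obtain ⟨hyc, hy0⟩ := (mem_lenv_iff hJ hJc).mp hy
    exact ⟨y, ⟨hyc, hyl⟩, by rw [eps_eq_sub_envHeight, hy0, zero_smul, sub_zero]⟩
  rw [Subset.antisymm_iff, and_iff_left hlatt_lenv, llenv, image_subset_iff]
  exact forall₂_congr fun x hx => (and_iff_right ⟨x, hx.1, rfl⟩).trans hx.2.sub_smul_eLast_iff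

lemma latt_lenv_eq_iff (hJ : StarConvex ℝ 0 J) (hJc : IsCompact J) :
    latt (lenv J) = latt (cone J) \ latt ((fun x => x + eLast n) '' cone J) ↔
      ∀ x ∈ latt (cone J), envHeight J x < 1 → envHeight J x = 0 := by
  have hlenv (y : Fin (n + 1) → ℝ) :
      y ∈ latt (lenv J) ↔ y ∈ latt (cone J) ∧ envHeight J y = 0 :=
    (and_congr_left' (mem_lenv_iff hJ hJc)).trans and_right_comm
  have hdiff (y : Fin (n + 1) → ℝ) :
      y ∈ latt (cone J) \ latt ((fun x => x + eLast n) '' cone J) ↔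
        y ∈ latt (cone J) ∧ envHeight J y < 1 := by
    refine and_congr_right fun hy => ?_
    rw [← not_le, ← mem_image_add_eLast_cone_iff hJ hJc hy.1]
    exact not_congr (and_iff_left hy.2)
  simp only [Set.ext_iff, hlenv, hdiff, and_congr_right_iff]
  refine forall₂_congr fun y hy => ?_
  have h0 := envHeight_nonneg hJ hJc hy.1
  exact ⟨fun h hlt => h.mpr hlt, fun h => ⟨fun h' => by linarith, h⟩⟩

lemma forall_envHeight_eq_intCast_iff (hJ : StarConvex ℝ 0 J) (hJc : IsCompact J) :
    (∀ x ∈ latt (cone J), ∃ z : ℤ, envHeight J x = z) ↔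
      ∀ x ∈ latt (cone J), envHeight J x < 1 → envHeight J x = 0 := by
  constructor
  · rintro h x hx hlt
    obtain ⟨z, hz⟩ := h x hx
    have hz0 : (0 : ℝ) ≤ z := hz ▸ envHeight_nonneg hJ hJc hx.1
    rw [hz] at hlt ⊢
    norm_cast at hz0 hlt ⊢
    omega
  · intro h x hx
    have hshift : x - (⌊envHeight J x⌋ : ℝ) • eLast n ∈ latt (cone J) :=
      ⟨(sub_smul_eLast_mem_cone_iff hJ hJc hx.1).mpr (Int.floor_le _),
        hx.2.sub_smul_eLast_iff.mpr ⟨_, rfl⟩⟩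
    have hfract := h _ hshift <| by
      rw [envHeight_sub_smul_eLast hJ hJc hx.1, Int.self_sub_floor]
      exact Int.fract_lt_one _
    rw [envHeight_sub_smul_eLast hJ hJc hx.1, sub_eq_zero] at hfract
    exact ⟨_, hfract⟩

theorem llenv_eq_iff_rind_general {n : ℕ} (J : Set (Fin n → ℝ))
    (hJconv : Convex ℝ J) (hJcpt : IsCompact J) (hJ0 : (0 : Fin n → ℝ) ∈ J) :
    llenv J = latt (lenv J) ↔
      latt (lenv J) = latt (cone J) \ latt ((fun x => x + eLast n) '' cone J) := by
  have hJ : StarConvex ℝ 0 J := hJconv.starConvex hJ0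
  rw [llenv_eq_latt_lenv_iff hJ hJcpt, latt_lenv_eq_iff hJ hJcpt]
  exact forall_envHeight_eq_intCast_iff hJ hJcpt

/-- Proposition 3.1, (a) ↔ (b). -/
theorem llenv_eq_iff_rind {n : ℕ} (hn : 1 ≤ n) (J : Set (Fin n → ℝ))
    (hJconv : Convex ℝ J) (hJcpt : IsCompact J) (hJ0 : (0 : Fin n → ℝ) ∈ J) :
    llenv J = latt (lenv J) ↔
      latt (lenv J) = latt (cone J) \ latt ((fun x => x + eLast n) '' cone J) :=
  llenv_eq_iff_rind_general J hJconv hJcpt hJ0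

end ArxivFreeSum
end
end

section
/- Let J ⊂ ℝ^n be a compact convex set and let ρ be a rational number. Then (lenv(cone J) + ρe_{n+1}) ∩ ℤ^{n+1} ≠ ∅ if and only if (lenv(cone J) − ρe_{n+1}) ∩ ℤ^{n+1} ≠ ∅. -/
open Set Pointwise
open scoped Classical

noncomputable section

namespace ArxivFreeSum

variable {n : ℕ}

/- Since `cone J` is a cone and `ε_J` is positively homogeneous, `lenv(cone J)` is closed under
positive scaling. If `x ∈ lenv(cone J)` and `x + ρ e_{n+1}` is a lattice point, then with
`ρ = a / d` and `k = 2d - 1` the point `k x ∈ lenv(cone J)` satisfies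
`k x - ρ e_{n+1} = k (x + ρ e_{n+1}) - 2a e_{n+1}`, again a lattice point. -/

lemma smul_mem_cone {J : Set (Fin n → ℝ)} {y : Fin (n + 1) → ℝ} (hy : y ∈ cone J)
    {t : ℝ} (ht : 0 ≤ t) : t • y ∈ cone J := by
  obtain ⟨l, a, ha, hl, rfl⟩ := hy
  exact ⟨t * l, a, ha, mul_nonneg ht hl, by rw [mul_smul]⟩

lemma smul_mem_cone_iff {J : Set (Fin n → ℝ)} {y : Fin (n + 1) → ℝ} {t : ℝ} (ht : 0 < t) :
    t • y ∈ cone J ↔ y ∈ cone J := by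
  refine ⟨fun h => ?_, fun h => smul_mem_cone h ht.le⟩
  simpa [smul_smul, inv_mul_cancel₀ ht.ne'] using smul_mem_cone h (inv_nonneg.mpr ht.le)

lemma eps_smul (J : Set (Fin n → ℝ)) (y : Fin (n + 1) → ℝ) {t : ℝ} (ht : 0 < t) :
    eps J (t • y) = t • eps J y := by
  have hset : {l : ℝ | t • y - l • eLast n ∈ cone J}
      = t • {l : ℝ | y - l • eLast n ∈ cone J} := by
    ext l
    rw [Set.mem_smul_set_iff_inv_smul_mem₀ ht.ne', Set.mem_ofPred_eq, Set.mem_ofPred_eq,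
      ← smul_mem_cone_iff (y := y - _) ht, smul_sub, smul_smul, smul_eq_mul,
      mul_inv_cancel_left₀ ht.ne']
  rw [eps, eps, hset, Real.sSup_smul_of_nonneg ht.le, smul_sub, smul_eq_mul, mul_smul]

lemma smul_mem_lenv {J : Set (Fin n → ℝ)} {x : Fin (n + 1) → ℝ} (hx : x ∈ lenv J)
    {t : ℝ} (ht : 0 < t) : t • x ∈ lenv J := by
  obtain ⟨y, hy, rfl⟩ := hx
  exact ⟨t • y, smul_mem_cone hy ht.le, eps_smul J y ht⟩

lemma IsLat.sub {m : ℕ} {x y : Fin m → ℝ} (hx : IsLat x) (hy : IsLat y) : IsLat (x - y) := by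
  intro i
  obtain ⟨a, ha⟩ := hx i
  obtain ⟨b, hb⟩ := hy i
  exact ⟨a - b, by simp [ha, hb]⟩

lemma IsLat.intCast_smul {m : ℕ} {x : Fin m → ℝ} (hx : IsLat x) (z : ℤ) :
    IsLat ((z : ℝ) • x) := by
  intro i
  obtain ⟨a, ha⟩ := hx i
  exact ⟨z * a, by simp [ha]⟩

lemma isLat_eLast (n : ℕ) : IsLat (eLast n) := by
  intro i
  by_cases hi : i = Fin.last n
  · exact ⟨1, by simp [eLast, hi]⟩
  · exact ⟨0, by simp [eLast, hi]⟩

lemma lenv_sub_latt_nonempty_of_add {J : Set (Fin n → ℝ)} {rho : ℚ}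
    (h : (latt ((fun x => x + (rho : ℝ) • eLast n) '' lenv J)).Nonempty) :
    (latt ((fun x => x - (rho : ℝ) • eLast n) '' lenv J)).Nonempty := by
  obtain ⟨_, ⟨x, hx, rfl⟩, hlat⟩ := h
  set k : ℤ := 2 * rho.den - 1
  have hk : (0 : ℝ) < k := by
    have : (1 : ℤ) ≤ rho.den := by exact_mod_cast rho.pos
    exact_mod_cast (by omega : (0 : ℤ) < k)
  have hnum : (rho : ℝ) * rho.den = rho.num := by exact_mod_cast rho.mul_den_eq_num
  have hshift : (k : ℝ) • x - (rho : ℝ) • eLast n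
      = (k : ℝ) • (x + (rho : ℝ) • eLast n) - ((2 * rho.num : ℤ) : ℝ) • eLast n := by
    rw [smul_add, smul_smul, add_sub_assoc, ← sub_smul, sub_eq_add_neg, ← neg_smul]
    congr 2
    push_cast [k]
    linear_combination (-2 : ℝ) * hnum
  refine ⟨_, ⟨(k : ℝ) • x, smul_mem_lenv hx hk, rfl⟩, ?_⟩
  simp only [hshift]
  exact (hlat.intCast_smul k).sub ((isLat_eLast n).intCast_smul _)

theorem shifted_lenv_lattice_symm_general {n : ℕ} (J : Set (Fin n → ℝ)) (rho : ℚ) :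
    (latt ((fun x => x + (rho : ℝ) • eLast n) '' lenv J)).Nonempty ↔
      (latt ((fun x => x - (rho : ℝ) • eLast n) '' lenv J)).Nonempty := by
  refine ⟨lenv_sub_latt_nonempty_of_add, fun h => ?_⟩
  simpa [sub_eq_add_neg] using lenv_sub_latt_nonempty_of_add (J := J) (rho := -rho)
    (by simpa [sub_eq_add_neg] using h)

/-- Lemma 4.4 (symmetry of lattice points on shifted lower envelopes). -/
theorem shifted_lenv_lattice_symm {n : ℕ} (hn : 1 ≤ n) (J : Set (Fin n → ℝ))
    (hJconv : Convex ℝ J) (hJcpt : IsCompact J) (rho : ℚ) :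
    (latt ((fun x => x + (rho : ℝ) • eLast n) '' lenv J)).Nonempty ↔
      (latt ((fun x => x - (rho : ℝ) • eLast n) '' lenv J)).Nonempty :=
  shifted_lenv_lattice_symm_general J rho

end ArxivFreeSum
end
end

section
/- Let Q ⊂ ℝ^n be a rational polytope and let ρ be a real number. If (lenv(cone Q) + ρe_{n+1}) ∩ ℤ^{n+1} ≠ ∅, then ρ is a rational number. -/
open Set Pointwise
open scoped Classical

noncomputable section

/-! The first `n` coordinates of a lattice point of the shifted envelope are integers `w`, and its
last coordinate is `ρ` plus the least height `t` with `(w, t) ∈ cone Q`. Writing `Q` as the convex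
hull of rational points `v_j`, this least height is the optimal value of the linear program
`min ∑ c_j` subject to `c ≥ 0`, `∑ c_j v_j = w`, whose data are rational; the optimum is attained,
and it equals the objective at a rational feasible point, so it is rational. -/

open Filter Topology Metric Matrix

section LinearProgramming

variable {ι κ : Type*} [Fintype ι]

theorem Matrix.exists_rat_vecMul_eq [Fintype κ] (A : Matrix ι κ ℚ) (b : κ → ℚ) (c : ι → ℝ)
    (h : c ᵥ* A.map (↑) = Rat.cast ∘ b) : ∃ q : ι → ℚ, q ᵥ* A = b := by
  by_contra! hb
  have hb' : b ∉ LinearMap.range A.vecMulLinear := fun ⟨q, hq⟩ => hb q hq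
  obtain ⟨f, hfb, hfA⟩ := Submodule.exists_dual_map_eq_bot_of_notMem hb'
    (Module.Projective.of_free (R := ℚ))
  obtain ⟨r, rfl⟩ := (dotProductEquiv ℚ κ).surjective f
  have hAr : A *ᵥ r = 0 := by
    ext i
    have := Submodule.mem_map_of_mem (f := dotProductEquiv ℚ κ r)
      (LinearMap.mem_range_self A.vecMulLinear (Pi.single i 1))
    rw [hfA, Submodule.mem_bot] at this
    simpa [single_one_vecMul, dotProduct_comm, mulVec, Matrix.row] using this
  have hAr' : A.map (↑) *ᵥ (Rat.cast ∘ r : κ → ℝ) = 0 := by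
    ext i
    simpa [hAr] using ((Rat.castHom ℝ).map_mulVec A r i).symm
  apply hfb
  have : ((b ⬝ᵥ r : ℚ) : ℝ) = 0 := by
    rw [← Rat.coe_castHom, (Rat.castHom ℝ).map_dotProduct, Rat.coe_castHom, ← h,
      ← dotProduct_mulVec, hAr', dotProduct_zero]
  simpa [dotProduct_comm] using this

theorem eventually_nonneg_add_smul {c d : ι → ℝ} (hc : 0 ≤ c)
    (hd : ∀ i, c i = 0 → d i = 0) : ∀ᶠ t in 𝓝 (0 : ℝ), 0 ≤ c + t • d := by
  simp only [Pi.le_def, eventually_all]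
  intro i
  rcases (hc i).eq_or_lt with h | h
  · simp [← h, hd i h.symm]
  · have : Tendsto (fun t : ℝ => c i + t * d i) (𝓝 0) (𝓝 (c i)) := by
      simpa using ((continuous_id.mul continuous_const).const_add (c i)).tendsto' 0 (c i) (by simp)
    exact (this.eventually (lt_mem_nhds h)).mono fun t ht => by simpa using ht.le

theorem norm_le_sum_of_nonneg {x : ι → ℝ} (hx : 0 ≤ x) : ‖x‖ ≤ ∑ i, x i :=
  (pi_norm_le_iff_of_nonneg (Finset.sum_nonneg fun i _ => hx i)).2 fun i => by
    rw [Real.norm_of_nonneg (hx i)]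
    exact Finset.single_le_sum (fun j _ => hx j) (Finset.mem_univ i)

theorem exists_isMinOn_sum {F : Set (ι → ℝ)} (hF : IsClosed F) (hF0 : ∀ x ∈ F, 0 ≤ x)
    (hne : F.Nonempty) : ∃ x ∈ F, IsMinOn (fun x => ∑ i, x i) F x := by
  obtain ⟨x₀, hx₀⟩ := hne
  refine (continuous_finsetSum _ fun i _ => continuous_apply i).continuousOn.exists_isMinOn'
    hF hx₀ ((hasBasis_cocompact.inf_principal F).eventually_iff.2
      ⟨closedBall 0 (∑ i, x₀ i), isCompact_closedBall _ _, fun x ⟨hxK, hxF⟩ => ?_⟩)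
  by_contra! hlt
  exact hxK (mem_closedBall_zero_iff.2 ((norm_le_sum_of_nonneg (hF0 x hxF)).trans hlt.le))

def nonnegSolutions (A : Matrix ι κ ℝ) (b : κ → ℝ) : Set (ι → ℝ) :=
  {x | 0 ≤ x ∧ x ᵥ* A = b}

theorem isClosed_nonnegSolutions (A : Matrix ι κ ℝ) (b : κ → ℝ) :
    IsClosed (nonnegSolutions A b) :=
  (isClosed_le continuous_const continuous_id).inter
    (isClosed_eq (A.vecMulLinear.continuous_of_finiteDimensional) continuous_const)

theorem exists_rat_vecMul_eq_and_support_subset [Fintype κ] {A : Matrix ι κ ℚ}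
    {b : κ → ℚ} {c : ι → ℝ} (hc : c ∈ nonnegSolutions (A.map (↑)) (Rat.cast ∘ b)) :
    ∃ q : ι → ℚ, q ᵥ* A = b ∧ ∀ i, c i = 0 → q i = 0 := by
  let D : Matrix ι ι ℚ := diagonal fun i => if c i = 0 then 1 else 0
  obtain ⟨q, hq⟩ := (fromCols A D).exists_rat_vecMul_eq (Sum.elim b 0) c (by
    ext (k | i)
    · simp [fromCols_map, vecMul_fromCols, hc.2]
    · by_cases hi : c i = 0 <;> simp [fromCols_map, vecMul_fromCols, vecMul_diagonal, D, hi])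
  refine ⟨q, ?_, fun i hi => ?_⟩
  · simpa [vecMul_fromCols] using congrArg (fun v => fun k => v (Sum.inl k)) hq
  · simpa [vecMul_fromCols, vecMul_diagonal, D, hi] using congrFun hq (Sum.inr i)

/-- Since `q` has support inside that of `c`, the minimizer `c` can be moved along `q - c` in both
directions without leaving the feasible region, so by Fermat's theorem the objective does not
change along `q - c`. -/
theorem exists_rat_eq_dotProduct_of_isMinOn [Fintype κ] {A : Matrix ι κ ℚ} {b : κ → ℚ}
    (p : ι → ℚ) {c : ι → ℝ} (hc : c ∈ nonnegSolutions (A.map (↑)) (Rat.cast ∘ b))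
    (hmin : IsMinOn (· ⬝ᵥ Rat.cast ∘ p) (nonnegSolutions (A.map (↑)) (Rat.cast ∘ b)) c) :
    ∃ q : ℚ, c ⬝ᵥ Rat.cast ∘ p = q := by
  obtain ⟨q, hqA, hq0⟩ := exists_rat_vecMul_eq_and_support_subset hc
  set d : ι → ℝ := Rat.cast ∘ q - c
  have hqA' : (Rat.cast ∘ q) ᵥ* A.map (↑) = (Rat.cast ∘ b : κ → ℝ) := by
    ext k
    simpa [hqA] using ((Rat.castHom ℝ).map_vecMul A q k).symm
  have hdA : d ᵥ* A.map (↑) = 0 := by rw [sub_vecMul, hqA', hc.2, sub_self]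
  have hlocal : IsLocalMin (fun t : ℝ => (c + t • d) ⬝ᵥ Rat.cast ∘ p) 0 := by
    have hd0 : ∀ i, c i = 0 → d i = 0 := fun i hi => by simp [d, hi, hq0 i hi]
    filter_upwards [eventually_nonneg_add_smul hc.1 hd0] with t ht
    simpa using hmin ⟨ht, by rw [add_vecMul, smul_vecMul, hdA, smul_zero, add_zero, hc.2]⟩
  have hderiv : HasDerivAt (fun t : ℝ => (c + t • d) ⬝ᵥ Rat.cast ∘ p) (d ⬝ᵥ Rat.cast ∘ p) 0 := by
    simp only [add_dotProduct, smul_dotProduct, smul_eq_mul]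
    simpa using ((hasDerivAt_id (0 : ℝ)).mul_const (d ⬝ᵥ Rat.cast ∘ p)).const_add
      (c ⬝ᵥ Rat.cast ∘ p)
  have hd : d ⬝ᵥ Rat.cast ∘ p = 0 := hlocal.hasDerivAt_eq_zero hderiv
  rw [sub_dotProduct, sub_eq_zero] at hd
  refine ⟨q ⬝ᵥ p, ?_⟩
  rw [← hd]
  simpa using ((Rat.castHom ℝ).map_dotProduct q p).symm

theorem exists_rat_isLeast_sum_nonnegSolutions [Fintype κ] (A : Matrix ι κ ℚ) (b : κ → ℚ)
    (hne : (nonnegSolutions (A.map (↑)) (Rat.cast ∘ b)).Nonempty) :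
    ∃ q : ℚ,
      IsLeast ((fun x : ι → ℝ => ∑ i, x i) '' nonnegSolutions (A.map (↑)) (Rat.cast ∘ b)) q := by
  obtain ⟨c, hc, hmin⟩ :=
    exists_isMinOn_sum (isClosed_nonnegSolutions _ _) (fun x hx => hx.1) hne
  have h1 : (Rat.cast ∘ (1 : ι → ℚ) : ι → ℝ) = 1 := funext fun _ => Rat.cast_one
  obtain ⟨q, hq⟩ := exists_rat_eq_dotProduct_of_isMinOn 1 hc (by simpa [h1, dotProduct_one])
  rw [h1, dotProduct_one] at hq
  exact ⟨q, hq ▸ ⟨⟨c, hc, rfl⟩, by rintro _ ⟨x, hx, rfl⟩; exact hmin hx⟩⟩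

end LinearProgramming

namespace ArxivFreeSum

variable {n : ℕ}

theorem smul_emb (l : ℝ) (a : Fin n → ℝ) : l • emb a = Fin.snoc (l • a) l := by
  ext i
  induction i using Fin.lastCases <;> simp [emb]

theorem sub_smul_eLast (x : Fin (n + 1) → ℝ) (l : ℝ) :
    x - l • eLast n = Fin.snoc (Fin.init x) (x (Fin.last n) - l) := by
  ext i
  induction i using Fin.lastCases <;> simp [eLast, Fin.init]

theorem snoc_mem_cone_convexHull_iff {V : Finset (Fin n → ℝ)} (hV : V.Nonempty)
    {w : Fin n → ℝ} {t : ℝ} :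
    Fin.snoc w t ∈ cone (convexHull ℝ (V : Set (Fin n → ℝ))) ↔
      ∃ c : V → ℝ, 0 ≤ c ∧ ∑ v, c v • (v : Fin n → ℝ) = w ∧ ∑ v, c v = t := by
  constructor
  · rintro ⟨l, a, ha, hl, h⟩
    rw [smul_emb, Fin.snoc_inj] at h
    obtain ⟨rfl, rfl⟩ := h
    obtain ⟨μ, hμ0, hμ1, rfl⟩ := Finset.mem_convexHull'.1 ha
    refine ⟨fun v => t * μ v, fun v => mul_nonneg hl (hμ0 v v.2), ?_, ?_⟩
    · simp_rw [mul_smul, ← Finset.smul_sum]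
      rw [Finset.sum_coe_sort V (fun v => μ v • v)]
    · rw [← Finset.mul_sum, Finset.sum_coe_sort V μ, hμ1, mul_one]
  · rintro ⟨c, hc0, rfl, rfl⟩
    rcases (Finset.sum_nonneg fun v _ => hc0 v).eq_or_lt with h | h
    · have hc : c = 0 := funext fun v =>
        (Finset.sum_eq_zero_iff_of_nonneg fun v _ => hc0 v).1 h.symm v (Finset.mem_univ v)
      obtain ⟨v₀, hv₀⟩ := hV
      exact ⟨0, v₀, subset_convexHull ℝ _ hv₀, le_rfl, by
        ext i
        induction i using Fin.lastCases <;> simp [hc]⟩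
    · refine ⟨∑ v, c v, Finset.univ.centerMass c Subtype.val,
        Finset.univ.centerMass_mem_convexHull (fun v _ => hc0 v) h fun v _ => v.2, h.le, ?_⟩
      rw [smul_emb, Finset.centerMass, smul_inv_smul₀ h.ne']

theorem exists_rat_isLeast_snoc_mem_cone {Q : Set (Fin n → ℝ)} (hQ : IsRatPolytope Q)
    {w : Fin n → ℝ} (hw : ∀ i, ∃ q : ℚ, w i = q) (hne : ∃ t, Fin.snoc w t ∈ cone Q) :
    ∃ q : ℚ, IsLeast {t | Fin.snoc w t ∈ cone Q} q := by
  obtain ⟨V, hV, rfl⟩ := hQ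
  have hVne : V.Nonempty := by
    obtain ⟨-, -, a, ha, -⟩ := hne
    exact Finset.coe_nonempty.1 (convexHull_nonempty_iff.1 ⟨a, ha⟩)
  choose vq hvq using hV
  choose wq hwq using hw
  obtain rfl : w = Rat.cast ∘ wq := funext hwq
  let A : Matrix V (Fin n) ℚ := Matrix.of fun v => vq v v.2
  have hA : A.map (↑) = Matrix.of fun v : V => (v : Fin n → ℝ) := by
    ext v i
    simp [A, hvq v v.2 i]
  have hheights :
      {t | Fin.snoc (Rat.cast ∘ wq) t ∈ cone (convexHull ℝ (V : Set (Fin n → ℝ)))} =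
      (fun x => ∑ v, x v) '' nonnegSolutions (A.map (↑)) (Rat.cast ∘ wq) := by
    ext t
    simp only [snoc_mem_cone_convexHull_iff hVne, mem_ofPred_eq, nonnegSolutions, hA, vecMul_eq_sum,
      mem_image, and_assoc]
    rfl
  obtain ⟨t₀, ht₀⟩ := hne
  obtain ⟨c, hc, -⟩ : t₀ ∈ (fun x => ∑ v, x v) '' nonnegSolutions (A.map (↑)) (Rat.cast ∘ wq) :=
    hheights ▸ ht₀
  rw [hheights]
  exact exists_rat_isLeast_sum_nonnegSolutions A wq ⟨c, hc⟩

theorem eps_eq_snoc_of_isLeast {J : Set (Fin n → ℝ)} {x : Fin (n + 1) → ℝ} {t : ℝ}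
    (ht : IsLeast {s | Fin.snoc (Fin.init x) s ∈ cone J} t) :
    eps J x = Fin.snoc (Fin.init x) t := by
  have hS : IsGreatest {l | x - l • eLast n ∈ cone J} (x (Fin.last n) - t) := by
    simp only [sub_smul_eLast]
    exact ⟨by simpa using ht.1, fun l hl => by linarith [ht.2 hl]⟩
  rw [eps, hS.csSup_eq, sub_smul_eLast, sub_sub_cancel]

theorem rational_shift_of_lattice_point_general {n : ℕ} (Q : Set (Fin n → ℝ))
    (hQ : IsRatPolytope Q) (rho : ℝ)
    (hne : (latt ((fun x => x + rho • eLast n) '' lenv Q)).Nonempty) :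
    ∃ q : ℚ, rho = (q : ℝ) := by
  obtain ⟨-, ⟨-, ⟨x, hx, rfl⟩, rfl⟩, hlat⟩ := hne
  have hw : ∀ i, ∃ q : ℚ, Fin.init x i = q := fun i => by
    obtain ⟨z, hz⟩ := hlat (Fin.castSucc i)
    exact ⟨z, by simpa [eps, eLast, Fin.init] using hz⟩
  obtain ⟨t, ht⟩ :=
    exists_rat_isLeast_snoc_mem_cone hQ hw ⟨x (Fin.last n), by rwa [Fin.snoc_init_self]⟩
  obtain ⟨z, hz⟩ := hlat (Fin.last n)
  rw [eps_eq_snoc_of_isLeast ht] at hz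
  simp only [eLast, Pi.add_apply, Fin.snoc_last, Pi.smul_apply, Pi.single_eq_same, smul_eq_mul,
    mul_one] at hz
  exact ⟨z - t, by push_cast; linarith⟩

/-- Lemma 4.5 (shifted lower envelopes containing lattice points have
rational shifts). -/
theorem rational_shift_of_lattice_point {n : ℕ} (hn : 1 ≤ n) (Q : Set (Fin n → ℝ))
    (hQ : IsRatPolytope Q) (rho : ℝ)
    (hne : (latt ((fun x => x + rho • eLast n) '' lenv Q)).Nonempty) :
    ∃ q : ℚ, rho = (q : ℝ) :=
  rational_shift_of_lattice_point_general Q hQ rho hne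

end ArxivFreeSum
end
end
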